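/- arXiv:2402.17856 — 4 statements merged into one kernel-verified Lean document; each statement's English description precedes it below -/
import Mathlib

section
/- For all integers q > r ≥ 1 and real α > 0, there exist ε ∈ (0,1) and n_0 ≥ 1 such that for all n ≥ n_0: if G is an r-uniform hypergraph on n vertices with minimum (r-1)-degree δ(G) ≥ (1-ε)n, then every edge of G is contained in at least (1-α)·C(n, q-r) copies of K_q^r in G. -/
open Finset

lemma aux_choose_sub (r n s : ℕ) :
    n.choose s ≤ (n - r).choose s + r * n.choose (s - 1) := by
  induction r with
  | zero => simp
  | succ r ih =>
    have key : (n - r).choose s ≤ (n - (r+1)).choose s + n.choose (s - 1) := by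
      rcases Nat.eq_zero_or_pos (n - r) with h | h
      · have : n - (r+1) = 0 := by omega
        rw [h, this]; exact Nat.le_add_right _ _
      · obtain ⟨m, hm⟩ : ∃ m, n - r = m + 1 := ⟨n - r - 1, by omega⟩
        have hm' : n - (r+1) = m := by omega
        rw [hm, hm']
        rcases s with _ | t
        · simp
        · rw [Nat.choose_succ_succ']
          simp only [Nat.add_sub_cancel]
          have : m.choose t ≤ n.choose t := Nat.choose_le_choose t (by omega)
          omega
    calc n.choose s ≤ (n - r).choose s + r * n.choose (s-1) := ih
      _ ≤ ((n - (r+1)).choose s + n.choose (s-1)) + r * n.choose (s-1) :=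
          Nat.add_le_add_right key _
      _ = (n - (r+1)).choose s + (r+1) * n.choose (s-1) := by ring

lemma aux_superset_count {α : Type*} [DecidableEq α] [Fintype α]
    (A : Finset α) (s : ℕ) (W : Finset α) :
    ((A.powersetCard s).filter (fun P => W ⊆ P)).card ≤ (Fintype.card α).choose (s - W.card) := by
  have := Finset.card_le_card_of_injOn (fun P => P \ W)
    (s := (A.powersetCard s).filter (fun P => W ⊆ P))
    (t := (univ : Finset α).powersetCard (s - W.card)) ?_ ?_
  · simpa using this
  · intro P hP
    simp only [mem_coe, mem_filter, mem_powersetCard] at hP ⊢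
    exact ⟨subset_univ _, by rw [card_sdiff_of_subset hP.2]; rw [hP.1.2]⟩
  · intro P₁ h₁ P₂ h₂ h
    simp only [coe_filter, Set.mem_setOf_eq, mem_powersetCard] at h₁ h₂
    calc P₁ = P₁ \ W ∪ W := (sdiff_union_of_subset h₁.2).symm
      _ = P₂ \ W ∪ W := by simp only [h]
      _ = P₂ := sdiff_union_of_subset h₂.2

lemma aux_pow_le_choose (s n : ℕ) (hn : 2*s ≤ n) :
    (n:ℝ)^s ≤ (s.factorial : ℝ) * 2^s * n.choose s := by
  have h1 : (((n + 1 - s : ℕ) : ℝ)) ^ s / (s.factorial : ℝ) ≤ n.choose s :=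
    Nat.pow_le_choose s n
  have h2 : (n:ℝ)/2 ≤ ((n + 1 - s : ℕ) : ℝ) := by
    have : n ≤ 2*(n+1-s) := by omega
    have := (Nat.cast_le (α := ℝ)).2 this
    push_cast at this ⊢
    linarith
  have hfac : (0:ℝ) < s.factorial := by positivity
  calc (n:ℝ)^s = 2^s * ((n:ℝ)/2)^s := by rw [div_pow]; field_simp
    _ ≤ 2^s * ((n + 1 - s : ℕ) : ℝ)^s := by
        gcongr
    _ = (s.factorial : ℝ) * 2^s * ((((n + 1 - s : ℕ) : ℝ)) ^ s / s.factorial) := by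
        field_simp
    _ ≤ (s.factorial : ℝ) * 2^s * n.choose s := by
        gcongr

lemma aux_main (q r n : ℕ) (hr : 1 ≤ r) (hqr : r < q) (ε : ℝ) (hε : 0 ≤ ε)
    (G : Finset (Finset (Fin n))) (hG : ∀ e ∈ G, e.card = r)
    (hδ : ∀ U : Finset (Fin n), U.card = r - 1 →
      (1 - ε) * n ≤ ((G.filter fun e => U ⊆ e).card : ℝ))
    (e : Finset (Fin n)) (he : e ∈ G) :
    ((n - r).choose (q - r) : ℝ) - 2^r * ε * (n:ℝ)^(q-r) ≤
      ((((univ : Finset (Fin n)).powersetCard q).filter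
        (fun Q => e ⊆ Q ∧ Q.powersetCard r ⊆ G)).card : ℝ) := by
  classical
  have hecard : e.card = r := hG e he
  set A : Finset (Fin n) := univ \ e with hA
  set AllP : Finset (Finset (Fin n)) := A.powersetCard (q - r) with hAllP
  set Good : Finset (Finset (Fin n)) :=
    AllP.filter (fun P => (e ∪ P).powersetCard r ⊆ G) with hGood
  set Bad : Finset (Finset (Fin n)) :=
    AllP.filter (fun P => ¬ ((e ∪ P).powersetCard r ⊆ G)) with hBad
  set badV : Finset (Fin n) → Finset (Fin n) :=
    fun U => univ.filter (fun v => v ∉ U ∧ insert v U ∉ G) with hbadVdef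
  set Tset : Finset (Finset (Fin n)) := e.powerset.filter (fun T => T ≠ e) with hTset
  set Tpart : Finset (Fin n) → Finset (Finset (Fin n)) := fun T =>
    (A.powersetCard (r - 1 - T.card)).biUnion (fun U' =>
      (badV (T ∪ U')).biUnion (fun v => AllP.filter (fun P => insert v U' ⊆ P))) with hTpart
  -- basic facts about members of AllP
  have hmemAllP : ∀ P ∈ AllP, (P ⊆ univ \ e) ∧ P.card = q - r := by
    intro P hP
    rw [hAllP, mem_powersetCard] at hP
    exact hP
  have hdisj : ∀ P ∈ AllP, Disjoint e P := by
    intro P hP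
    rw [disjoint_right]
    intro x hx
    exact (mem_sdiff.1 ((hmemAllP P hP).1 hx)).2
  have hcardA : A.card = n - r := by
    rw [hA, card_sdiff_of_subset (subset_univ e), hecard, card_univ, Fintype.card_fin]
  -- Step 1 : Good injects into the target
  have K1 : Good.card ≤ ((((univ : Finset (Fin n)).powersetCard q).filter
        (fun Q => e ⊆ Q ∧ Q.powersetCard r ⊆ G))).card := by
    apply Finset.card_le_card_of_injOn (fun P => e ∪ P)
    · intro P hP
      rw [hGood, mem_coe, mem_filter] at hP
      obtain ⟨hP1, hP2⟩ := hP
      rw [mem_coe, mem_filter, mem_powersetCard]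
      refine ⟨⟨subset_univ _, ?_⟩, subset_union_left, hP2⟩
      rw [card_union_of_disjoint (hdisj P hP1), hecard, (hmemAllP P hP1).2]
      omega
    · intro P₁ h₁ P₂ h₂ h
      rw [hGood, coe_filter, Set.mem_setOf_eq] at h₁ h₂
      have e₁ : (e ∪ P₁) \ e = P₁ := union_sdiff_cancel_left (hdisj P₁ h₁.1)
      have e₂ : (e ∪ P₂) \ e = P₂ := union_sdiff_cancel_left (hdisj P₂ h₂.1)
      rw [← e₁, ← e₂]
      simp only [h]
  -- Step 2 : Good + Bad = AllP
  have K2 : Good.card + Bad.card = (n - r).choose (q - r) := by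
    rw [hGood, hBad, Finset.card_filter_add_card_filter_not, hAllP,
      card_powersetCard, hcardA]
  -- bound on badV
  have K4 : ∀ U : Finset (Fin n), U.card = r - 1 → ((badV U).card : ℝ) ≤ ε * n := by
    intro U hU
    set goodv : Finset (Fin n) := (univ \ U).filter (fun v => insert v U ∈ G) with hgoodv
    have h1 : G.filter (fun f => U ⊆ f) ⊆ goodv.image (fun v => insert v U) := by
      intro f hf
      rw [mem_filter] at hf
      obtain ⟨hfG, hUf⟩ := hf
      have hfcard : f.card = r := hG f hfG
      have hne : (f \ U).Nonempty := by
        rw [← card_pos, card_sdiff_of_subset hUf, hfcard, hU]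
        omega
      obtain ⟨w, hw⟩ := hne
      rw [mem_sdiff] at hw
      have hins : insert w U ⊆ f := insert_subset hw.1 hUf
      have hcard : (insert w U).card = r := by
        rw [card_insert_of_notMem hw.2, hU]; omega
      have heq : insert w U = f :=
        Finset.eq_of_subset_of_card_le hins (by rw [hfcard, hcard])
      rw [mem_image]
      refine ⟨w, ?_, heq⟩
      rw [hgoodv, mem_filter, mem_sdiff]
      exact ⟨⟨mem_univ _, hw.2⟩, by rw [heq]; exact hfG⟩
    have h2 : (G.filter (fun f => U ⊆ f)).card ≤ goodv.card :=
      le_trans (card_le_card h1) card_image_le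
    have h3 : Disjoint goodv (badV U) := by
      rw [disjoint_left]
      intro v hv hv'
      rw [hgoodv, mem_filter] at hv
      rw [hbadVdef, mem_filter] at hv'
      exact hv'.2.2 hv.2
    have h4 : goodv.card + (badV U).card ≤ n := by
      have := card_le_card (subset_univ (goodv ∪ badV U))
      rw [card_union_of_disjoint h3, card_univ, Fintype.card_fin] at this
      exact this
    have h5 := hδ U hU
    have h2' : ((G.filter (fun f => U ⊆ f)).card : ℝ) ≤ goodv.card := by exact_mod_cast h2
    have h4' : (goodv.card : ℝ) + ((badV U).card : ℝ) ≤ n := by exact_mod_cast h4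
    nlinarith [h5, h2', h4']
  -- Step 3 : Bad is covered
  have K3 : Bad ⊆ Tset.biUnion Tpart := by
    intro P hP
    rw [hBad, mem_filter] at hP
    obtain ⟨hPAll, hPbad⟩ := hP
    obtain ⟨hPA, hPcard⟩ := hmemAllP P hPAll
    obtain ⟨S, hS, hSG⟩ := Finset.not_subset.1 hPbad
    rw [mem_powersetCard] at hS
    obtain ⟨hSsub, hScard⟩ := hS
    have hSne : S ≠ e := fun h => hSG (h ▸ he)
    have hSd : (S \ e).Nonempty := by
      rw [sdiff_nonempty]
      intro hsub
      exact hSne (Finset.eq_of_subset_of_card_le hsub (by rw [hScard, hecard]))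
    obtain ⟨v, hv⟩ := hSd
    have hvS : v ∈ S := (mem_sdiff.1 hv).1
    have hve : v ∉ e := (mem_sdiff.1 hv).2
    have hSeP : S \ e ⊆ P := by
      intro x hx
      obtain ⟨hxS, hxe⟩ := mem_sdiff.1 hx
      rcases mem_union.1 (hSsub hxS) with h | h
      · exact absurd h hxe
      · exact h
    have hTe : S ∩ e ⊆ e := inter_subset_right
    have hTne : S ∩ e ≠ e := by
      intro h
      have heS : e ⊆ S := by
        rw [← h]; exact inter_subset_left
      exact hSne ((Finset.eq_of_subset_of_card_le heS (by rw [hScard, hecard])).symm)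
    have hTcard : (S ∩ e).card < r := by
      have := card_lt_card (ssubset_of_subset_of_ne hTe hTne)
      omega
    have hU'card : ((S \ e).erase v).card = r - 1 - (S ∩ e).card := by
      have h1 : (S ∩ e).card + (S \ e).card = r := by
        rw [Finset.card_inter_add_card_sdiff, hScard]
      rw [card_erase_of_mem hv]
      omega
    rw [Finset.mem_biUnion]
    refine ⟨S ∩ e, ?_, ?_⟩
    · rw [hTset, mem_filter, mem_powerset]
      exact ⟨hTe, hTne⟩
    rw [hTpart]
    rw [Finset.mem_biUnion]
    refine ⟨(S \ e).erase v, ?_, ?_⟩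
    · rw [mem_powersetCard]
      refine ⟨?_, hU'card⟩
      intro x hx
      have hx' : x ∈ S \ e := mem_of_mem_erase hx
      rw [hA, mem_sdiff]
      exact ⟨mem_univ _, (mem_sdiff.1 hx').2⟩
    rw [Finset.mem_biUnion]
    have hkey : insert v ((S ∩ e) ∪ (S \ e).erase v) = S := by
      ext x
      simp only [mem_insert, mem_union, mem_inter, mem_erase, mem_sdiff]
      by_cases hxv : x = v
      · subst hxv; simp [hvS]
      · simp only [hxv, false_or, ne_eq, not_false_eq_true, true_and]
        constructor
        · rintro (⟨h1, _⟩ | ⟨h1, _⟩) <;> exact h1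
        · intro hxS
          by_cases hxe : x ∈ e
          · exact Or.inl ⟨hxS, hxe⟩
          · exact Or.inr ⟨hxS, hxe⟩
    refine ⟨v, ?_, ?_⟩
    · rw [hbadVdef, mem_filter]
      refine ⟨mem_univ _, ?_, ?_⟩
      · rw [mem_union]
        rintro (h | h)
        · exact hve (mem_inter.1 h).2
        · exact (notMem_erase v _) h
      · rw [hkey]; exact hSG
    · rw [mem_filter]
      refine ⟨hPAll, ?_⟩
      apply insert_subset (hSeP hv)
      exact (erase_subset _ _).trans hSeP
  -- Step 4 : per-T bound
  have K5 : ∀ T ∈ Tset, ((Tpart T).card : ℝ) ≤ ε * (n:ℝ)^(q-r) := by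
    intro T hT
    rw [hTset, mem_filter, mem_powerset] at hT
    have hTcard : T.card < r := by
      have := card_lt_card (ssubset_of_subset_of_ne hT.1 hT.2)
      omega
    set k : ℕ := r - 1 - T.card with hk
    have hUcard : ∀ U' ∈ A.powersetCard k, (T ∪ U').card = r - 1 := by
      intro U' hU'
      rw [mem_powersetCard] at hU'
      have hdisjTU : Disjoint T U' := by
        rw [disjoint_left]
        intro x hx hx'
        exact (mem_sdiff.1 (hU'.1 hx')).2 (hT.1 hx)
      rw [card_union_of_disjoint hdisjTU, hU'.2]
      omega
    have hvnot : ∀ U', ∀ v ∈ badV (T ∪ U'), v ∉ U' := by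
      intro U' v hv
      rw [hbadVdef, mem_filter] at hv
      intro h
      exact hv.2.1 (mem_union_right _ h)
    have hinscard : ∀ U' ∈ A.powersetCard k, ∀ v ∈ badV (T ∪ U'),
        (insert v U').card = k + 1 := by
      intro U' hU' v hv
      rw [mem_powersetCard] at hU'
      rw [card_insert_of_notMem (hvnot U' v hv), hU'.2]
    by_cases hks : k + 1 ≤ q - r
    · have hinner : ∀ U' ∈ A.powersetCard k, ∀ v ∈ badV (T ∪ U'),
          ((AllP.filter (fun P => insert v U' ⊆ P)).card : ℝ) ≤ (n:ℝ)^(q - r - (k+1)) := by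
        intro U' hU' v hv
        have h1 := aux_superset_count A (q - r) (insert v U')
        rw [Fintype.card_fin, hinscard U' hU' v hv] at h1
        have h2 : n.choose (q - r - (k+1)) ≤ n ^ (q - r - (k+1)) := Nat.choose_le_pow _ _
        calc ((AllP.filter (fun P => insert v U' ⊆ P)).card : ℝ)
            ≤ (n.choose (q - r - (k+1)) : ℝ) := by exact_mod_cast h1
          _ ≤ ((n ^ (q - r - (k+1)) : ℕ) : ℝ) := by exact_mod_cast h2
          _ = (n:ℝ)^(q - r - (k+1)) := by push_cast; ring
      calc ((Tpart T).card : ℝ)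
          ≤ ∑ U' ∈ A.powersetCard k,
              (((badV (T ∪ U')).biUnion
                (fun v => AllP.filter (fun P => insert v U' ⊆ P))).card : ℝ) := by
            rw [hTpart]
            exact_mod_cast Finset.card_biUnion_le
        _ ≤ ∑ U' ∈ A.powersetCard k, (ε * n) * (n:ℝ)^(q - r - (k+1)) := by
            apply Finset.sum_le_sum
            intro U' hU'
            calc (((badV (T ∪ U')).biUnion
                (fun v => AllP.filter (fun P => insert v U' ⊆ P))).card : ℝ)
                ≤ ∑ v ∈ badV (T ∪ U'),
                    ((AllP.filter (fun P => insert v U' ⊆ P)).card : ℝ) := by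
                  exact_mod_cast Finset.card_biUnion_le
              _ ≤ ∑ v ∈ badV (T ∪ U'), (n:ℝ)^(q - r - (k+1)) :=
                  Finset.sum_le_sum (hinner U' hU')
              _ = ((badV (T ∪ U')).card : ℝ) * (n:ℝ)^(q - r - (k+1)) := by
                  rw [Finset.sum_const, nsmul_eq_mul]
              _ ≤ (ε * n) * (n:ℝ)^(q - r - (k+1)) := by
                  apply mul_le_mul_of_nonneg_right (K4 _ (hUcard U' hU'))
                  positivity
        _ = ((A.powersetCard k).card : ℝ) * ((ε * n) * (n:ℝ)^(q - r - (k+1))) := by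
            rw [Finset.sum_const, nsmul_eq_mul]
        _ ≤ (n:ℝ)^k * ((ε * n) * (n:ℝ)^(q - r - (k+1))) := by
            apply mul_le_mul_of_nonneg_right
            · have h1 : (A.powersetCard k).card = A.card.choose k := card_powersetCard _ _
              have h2 : A.card.choose k ≤ n.choose k :=
                Nat.choose_le_choose k (by rw [hcardA]; omega)
              have h3 : n.choose k ≤ n ^ k := Nat.choose_le_pow _ _
              calc ((A.powersetCard k).card : ℝ) ≤ ((n ^ k : ℕ) : ℝ) := by
                    exact_mod_cast h1 ▸ le_trans h2 h3
                _ = (n:ℝ)^k := by push_cast; ring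
            · positivity
        _ = ε * (n:ℝ)^(q-r) := by
            have h2 : (n:ℝ)^(q-r) = (n:ℝ)^k * (n:ℝ)^1 * (n:ℝ)^(q - r - (k+1)) := by
              rw [← pow_add, ← pow_add]
              congr 1
              omega
            rw [h2]
            ring
    · -- degenerate case : all inner sets are empty
      have hempty : ∀ U' ∈ A.powersetCard k, ∀ v ∈ badV (T ∪ U'),
          AllP.filter (fun P => insert v U' ⊆ P) = ∅ := by
        intro U' hU' v hv
        rw [Finset.filter_eq_empty_iff]
        intro P hP hins
        have h1 := card_le_card hins
        rw [hinscard U' hU' v hv, (hmemAllP P hP).2] at h1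
        omega
      have h0 : Tpart T = ∅ := by
        rw [Finset.eq_empty_iff_forall_notMem]
        intro P hP
        simp only [hTpart, Finset.mem_biUnion] at hP
        obtain ⟨U', hU', v, hv, hPf⟩ := hP
        rw [hempty U' hU' v hv] at hPf
        exact notMem_empty P hPf
      rw [h0]
      simp only [card_empty, Nat.cast_zero]
      positivity
  -- assemble
  have K6 : (Bad.card : ℝ) ≤ 2^r * ε * (n:ℝ)^(q-r) := by
    calc (Bad.card : ℝ) ≤ ((Tset.biUnion Tpart).card : ℝ) := by
          exact_mod_cast card_le_card K3
      _ ≤ ∑ T ∈ Tset, ((Tpart T).card : ℝ) := by exact_mod_cast Finset.card_biUnion_le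
      _ ≤ ∑ T ∈ Tset, ε * (n:ℝ)^(q-r) := Finset.sum_le_sum K5
      _ = (Tset.card : ℝ) * (ε * (n:ℝ)^(q-r)) := by rw [Finset.sum_const, nsmul_eq_mul]
      _ ≤ (2:ℝ)^r * (ε * (n:ℝ)^(q-r)) := by
          apply mul_le_mul_of_nonneg_right
          · have h1 : Tset.card ≤ e.powerset.card := by
              rw [hTset]; exact card_filter_le _ _
            rw [card_powerset, hecard] at h1
            calc (Tset.card : ℝ) ≤ ((2^r : ℕ) : ℝ) := by exact_mod_cast h1
              _ = (2:ℝ)^r := by push_cast; ring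
          · positivity
      _ = 2^r * ε * (n:ℝ)^(q-r) := by ring
  have K2' : (Good.card : ℝ) + (Bad.card : ℝ) = ((n - r).choose (q - r) : ℝ) := by
    exact_mod_cast K2
  have K1' : (Good.card : ℝ) ≤ ((((univ : Finset (Fin n)).powersetCard q).filter
        (fun Q => e ⊆ Q ∧ Q.powersetCard r ⊆ G)).card : ℝ) := by exact_mod_cast K1
  linarith
/-- for all `q > r ≥ 1` and `α > 0` there are `ε ∈ (0,1)` and `n₀` such that
for `n ≥ n₀`: any `r`-uniform hypergraph `G` on `n` vertices with minimum `(r-1)`-degree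
at least `(1-ε)n` has, through each of its edges, at least `(1-α)·C(n, q-r)` copies of
`K_q^r`. -/
theorem stmt_5 (q r : ℕ) (hr : 1 ≤ r) (hqr : r < q) (a : ℝ) (ha : 0 < a) :
    ∃ ε : ℝ, 0 < ε ∧ ε < 1 ∧ ∃ n₀ : ℕ, ∀ n, n₀ ≤ n →
      ∀ G : Finset (Finset (Fin n)), (∀ e ∈ G, e.card = r) →
        (∀ U : Finset (Fin n), U.card = r - 1 →
          (1 - ε) * n ≤ ((G.filter fun e => U ⊆ e).card : ℝ)) →
        ∀ e ∈ G,
          (1 - a) * (n.choose (q - r) : ℝ) ≤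
            ((((univ : Finset (Fin n)).powersetCard q).filter
              (fun Q => e ⊆ Q ∧ Q.powersetCard r ⊆ G)).card : ℝ) := by
  have hs : 1 ≤ q - r := by omega
  set c : ℝ := ((q - r).factorial : ℝ) * 2^(q - r) with hc
  have hc0 : 0 < c := by positivity
  set ε : ℝ := min (1/2) (a / (2^(r+1) * c)) with hεdef
  have hε0 : 0 < ε := lt_min (by norm_num) (by positivity)
  have hε1 : ε < 1 := lt_of_le_of_lt (min_le_left _ _) (by norm_num)
  have hεa : ε ≤ a / (2^(r+1) * c) := min_le_right _ _
  refine ⟨ε, hε0, hε1, max (2*(q - r)) (⌈2*r*c/a⌉₊ + 1), ?_⟩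
  intro n hn G hG hδ e he
  have hn2s : 2*(q - r) ≤ n := le_trans (le_max_left _ _) hn
  have hnceil : ⌈2*r*c/a⌉₊ + 1 ≤ n := le_trans (le_max_right _ _) hn
  have hnr : (2*r*c/a : ℝ) ≤ n := by
    have h1 : (⌈2*r*c/a⌉₊ : ℝ) ≤ n := by exact_mod_cast (by omega : ⌈2*r*c/a⌉₊ ≤ n)
    exact le_trans (Nat.le_ceil _) h1
  have hn0 : 0 < n := by omega
  have hnR : (0:ℝ) < n := by exact_mod_cast hn0
  have hC0 : (0:ℝ) ≤ (n.choose (q - r) : ℝ) := by positivity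
  have main := aux_main q r n hr hqr ε hε0.le G hG hδ e he
  have hpow : (n:ℝ)^(q - r) ≤ c * (n.choose (q - r) : ℝ) := by
    have := aux_pow_le_choose (q - r) n hn2s
    rw [hc]; linarith
  have hcs : (n.choose (q - r) : ℝ) ≤
      ((n - r).choose (q - r) : ℝ) + r * (n.choose (q - r - 1) : ℝ) := by
    exact_mod_cast aux_choose_sub r n (q - r)
  have hcp : (n.choose (q - r - 1) : ℝ) ≤ (n:ℝ)^(q - r - 1) := by
    calc (n.choose (q - r - 1) : ℝ) ≤ ((n ^ (q - r - 1) : ℕ) : ℝ) := by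
          exact_mod_cast Nat.choose_le_pow _ _
      _ = (n:ℝ)^(q - r - 1) := by push_cast; ring
  have hpow1 : (n:ℝ)^(q - r) = (n:ℝ)^(q - r - 1) * n := by
    rw [← pow_succ]
    congr 1
    omega
  -- (i) : 2^r * ε * n^(q-r) ≤ (a/2) * C
  have h2rc : (2:ℝ)^r * ε * c ≤ a/2 := by
    calc (2:ℝ)^r * ε * c ≤ (2:ℝ)^r * (a / (2^(r+1) * c)) * c := by gcongr
      _ = a/2 := by
          rw [pow_succ]
          field_simp
  have key1 : (2:ℝ)^r * ε * (n:ℝ)^(q - r) ≤ (a/2) * (n.choose (q - r) : ℝ) := by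
    calc (2:ℝ)^r * ε * (n:ℝ)^(q - r) ≤ (2:ℝ)^r * ε * (c * (n.choose (q - r) : ℝ)) := by
          apply mul_le_mul_of_nonneg_left hpow
          positivity
      _ = ((2:ℝ)^r * ε * c) * (n.choose (q - r) : ℝ) := by ring
      _ ≤ (a/2) * (n.choose (q - r) : ℝ) := mul_le_mul_of_nonneg_right h2rc hC0
  -- (ii) : r * n^(q-r-1) ≤ (a/2) * C
  have hnr' : 2*(r:ℝ)*c ≤ a * n := by
    rw [div_le_iff₀ ha] at hnr
    linarith
  have key2' : 2*c*((r:ℝ)*(n:ℝ)^(q - r - 1)) ≤ 2*c*((a/2)*(n.choose (q - r) : ℝ)) := by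
    calc 2*c*((r:ℝ)*(n:ℝ)^(q - r - 1)) = (2*(r:ℝ)*c)*(n:ℝ)^(q - r - 1) := by ring
      _ ≤ (a*n)*(n:ℝ)^(q - r - 1) := by
          apply mul_le_mul_of_nonneg_right hnr'
          positivity
      _ = a*(n:ℝ)^(q - r) := by rw [hpow1]; ring
      _ ≤ a*(c*(n.choose (q - r) : ℝ)) := mul_le_mul_of_nonneg_left hpow ha.le
      _ = 2*c*((a/2)*(n.choose (q - r) : ℝ)) := by ring
  have key2 : (r:ℝ)*(n:ℝ)^(q - r - 1) ≤ (a/2)*(n.choose (q - r) : ℝ) :=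
    le_of_mul_le_mul_left key2' (by positivity)
  have hrX : (r:ℝ) * (n.choose (q - r - 1) : ℝ) ≤ (r:ℝ)*(n:ℝ)^(q - r - 1) := by
    apply mul_le_mul_of_nonneg_left hcp
    positivity
  linarith [main, hcs, hrX, key1, key2]
end

section
/- Let q > r ≥ 2 and g ≥ 3 be integers. Let Q be a copy of K_q^r in K_n^r and let J ⊆ K_n^r. Then for every integer s, the number of (Q,J)-large Erdős configurations F of size s containing Q satisfies |Large_J(Q)^{(s)}| ≤ (sq)·C(sq, r-1)·C(sq, q)^s · n^{(q-r)(s-1)} · Δ(J)/n. -/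
open Finset
open scoped Classical

/-- `F` is an `((q-r)·i + r, i)` Erdős configuration (for `i = |F| ≥ 3`): a set of `i`
copies of `K_q^r` spanning at most `(q-r)i + r` vertices containing no
`((q-r)i' + r, i')`-configuration for `2 ≤ i' < i`. -/
def IsErdosConfig {α : Type*} [DecidableEq α] (q r : ℕ) (F : Finset (Finset α)) : Prop :=
  3 ≤ F.card ∧ (∀ Q ∈ F, Q.card = q) ∧
    (F.biUnion id).card ≤ (q - r) * F.card + r ∧
    ∀ F' ⊆ F, 2 ≤ F'.card → F'.card < F.card →
      (q - r) * F'.card + r < (F'.biUnion id).card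

/-- The maximum `(r-1)`-degree `Δ(J)` of an `r`-graph `J` on `Fin n`. -/
noncomputable def maxCodeg (n r : ℕ) (J : Finset (Finset (Fin n))) : ℕ :=
  ((univ : Finset (Fin n)).powersetCard (r - 1)).sup fun U =>
    (J.filter fun e => U ⊆ e).card

namespace Stmt6
open Function


open Function

variable {n q r s : ℕ} {J : Finset (Finset (Fin n))} {Q : Finset (Fin n)}
  {F : Finset (Finset (Fin n))}

structure Ctx (n q r s : ℕ) (J : Finset (Finset (Fin n))) (Q : Finset (Fin n)) : Prop where
  hr : 2 ≤ r
  hqr : r < q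
  hs : 3 ≤ s
  hn : 0 < n
  hQ : Q.card = q
  hJ : ∀ f ∈ J, f.card = r

structure Good (n q r s : ℕ) (J : Finset (Finset (Fin n))) (Q : Finset (Fin n))
    (F : Finset (Finset (Fin n))) : Prop where
  cliq : ∀ C ∈ F, C.card = q
  vcard : (F.biUnion id).card ≤ (q - r) * s + r
  QF : Q ∈ F
  cardF : F.card = s
  large : ∃ f ∈ J, f ⊆ F.biUnion id ∧ ¬ f ⊆ Q

/-- sorted list of extra vertices -/
noncomputable def EL (Q : Finset (Fin n)) (F : Finset (Finset (Fin n))) : List (Fin n) :=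
  ((F.biUnion id) \ Q).sort (· ≤ ·)

noncomputable def LL (Q : Finset (Fin n)) (F : Finset (Finset (Fin n))) : List (Fin n) :=
  Q.sort (· ≤ ·) ++ EL Q F

noncomputable def bigf (J : Finset (Finset (Fin n))) (Q : Finset (Fin n))
    (F : Finset (Finset (Fin n))) : Finset (Fin n) :=
  if h : ∃ f ∈ J, f ⊆ F.biUnion id ∧ ¬ f ⊆ Q then h.choose else ∅

noncomputable def vtx (hn : 0 < n) (J : Finset (Finset (Fin n))) (Q : Finset (Fin n))
    (F : Finset (Finset (Fin n))) : Fin n :=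
  if h : (bigf J Q F \ Q).Nonempty then (bigf J Q F \ Q).min' h else ⟨0, hn⟩

noncomputable def idx (Q : Finset (Fin n)) (F : Finset (Finset (Fin n))) (x : Fin n) : ℕ :=
  (LL Q F).idxOf x

noncomputable def wmap (hn : 0 < n) (Q : Finset (Fin n)) (F : Finset (Finset (Fin n)))
    (i : ℕ) : Fin n :=
  (LL Q F).getD i ⟨0, hn⟩

noncomputable def efun (hn : 0 < n) (Q : Finset (Fin n)) (F : Finset (Finset (Fin n)))
    (i : ℕ) : Fin n :=
  (EL Q F).getD i ⟨0, hn⟩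

noncomputable def cidx (k : ℕ) (hk : 0 < k) (hn : 0 < n) (J : Finset (Finset (Fin n)))
    (Q : Finset (Fin n)) (F : Finset (Finset (Fin n))) : Fin k :=
  ⟨(EL Q F).idxOf (vtx hn J Q F) % k, Nat.mod_lt _ hk⟩

noncomputable def epr (k : ℕ) (hk : 0 < k) (hn : 0 < n) (J : Finset (Finset (Fin n)))
    (Q : Finset (Fin n)) (F : Finset (Finset (Fin n))) : Fin k → Fin n :=
  Function.update (fun i : Fin k => efun hn Q F i) (cidx k hk hn J Q F) ⟨0, hn⟩

noncomputable def Uenc (hn : 0 < n) (J : Finset (Finset (Fin n))) (Q : Finset (Fin n))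
    (F : Finset (Finset (Fin n))) : Finset ℕ :=
  ((Stmt6.bigf J Q F).erase (vtx hn J Q F)).image (idx Q F)

noncomputable def Fenc (Q : Finset (Fin n)) (F : Finset (Finset (Fin n))) :
    Finset (Finset ℕ) :=
  F.image fun C => C.image (idx Q F)

noncomputable def dec (q k : ℕ) (hk : 0 < k) (hn : 0 < n) (Q : Finset (Fin n))
    (y : Fin k × (Fin k → Fin n)) (i : ℕ) : Fin n :=
  if i < q then (Q.sort (· ≤ ·)).getD i ⟨0, hn⟩ else y.2 ⟨(i - q) % k, Nat.mod_lt _ hk⟩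

noncomputable def pim (q k : ℕ) (hk : 0 < k) (hn : 0 < n) (J : Finset (Finset (Fin n)))
    (Q : Finset (Fin n)) (F : Finset (Finset (Fin n))) :
    (Fin k × (Fin k → Fin n)) × (Finset ℕ × Finset (Finset ℕ)) :=
  ((cidx k hk hn J Q F, epr k hk hn J Q F), (Uenc hn J Q F, Fenc Q F))

/-! Basic lemmas -/

lemma arith_split (hqr : r < q) (hs : 3 ≤ s) : (q - r) * s + r = (q - r) * (s - 1) + q := by
  obtain ⟨t, rfl⟩ : ∃ t, s = t + 1 := ⟨s - 1, by omega⟩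
  rw [Nat.mul_succ]
  simp only [Nat.add_sub_cancel]
  omega

lemma qk_le (hqr : r < q) (hs : 3 ≤ s) : q + (q - r) * (s - 1) ≤ s * q := by
  obtain ⟨t, rfl⟩ : ∃ t, s = t + 1 := ⟨s - 1, by omega⟩
  simp only [Nat.add_sub_cancel]
  have h1 : (q - r) * t ≤ q * t := Nat.mul_le_mul_right t (Nat.sub_le q r)
  have h2 : (t + 1) * q = q * t + q := by ring
  omega

lemma QsubV (good : Good n q r s J Q F) : Q ⊆ F.biUnion id :=
  Finset.subset_biUnion_of_mem id good.QF

lemma EL_len (ctx : Ctx n q r s J Q) (good : Good n q r s J Q F) :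
    (EL Q F).length ≤ (q - r) * (s - 1) := by
  have h1 : (EL Q F).length = (F.biUnion id \ Q).card := Finset.length_sort _
  have h2 : (F.biUnion id \ Q).card = (F.biUnion id).card - Q.card :=
    Finset.card_sdiff_of_subset (QsubV good)
  have h3 := good.vcard
  have h4 := Finset.card_le_card (QsubV good)
  have h5 := arith_split ctx.hqr ctx.hs
  have h6 := ctx.hQ
  omega

lemma LL_len (ctx : Ctx n q r s J Q) (good : Good n q r s J Q F) :
    (LL Q F).length = q + (EL Q F).length := by
  rw [LL, List.length_append, Finset.length_sort, ctx.hQ]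

lemma LL_len_le (ctx : Ctx n q r s J Q) (good : Good n q r s J Q F) :
    (LL Q F).length ≤ s * q := by
  have := LL_len ctx good
  have := EL_len ctx good
  have := qk_le ctx.hqr ctx.hs
  omega

lemma mem_LL (good : Good n q r s J Q F) {x : Fin n} (hx : x ∈ F.biUnion id) :
    x ∈ LL Q F := by
  rw [LL, List.mem_append, Finset.mem_sort]
  by_cases hq : x ∈ Q
  · exact Or.inl hq
  · exact Or.inr ((Finset.mem_sort _).2 (Finset.mem_sdiff.2 ⟨hx, hq⟩))

lemma idx_lt_LL (good : Good n q r s J Q F) {x : Fin n} (hx : x ∈ F.biUnion id) :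
    idx Q F x < (LL Q F).length :=
  List.idxOf_lt_length_iff.2 (mem_LL good hx)

lemma wmap_idx (hn : 0 < n) (good : Good n q r s J Q F) {x : Fin n}
    (hx : x ∈ F.biUnion id) : wmap hn Q F (idx Q F x) = x := by
  have h1 := idx_lt_LL good hx
  rw [wmap, List.getD_eq_getElem _ _ h1]
  exact List.getElem_idxOf h1

lemma image_wmap_idx (hn : 0 < n) (good : Good n q r s J Q F) {C : Finset (Fin n)}
    (hC : C ⊆ F.biUnion id) : (C.image (idx Q F)).image (wmap hn Q F) = C := by
  rw [Finset.image_image]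
  have h1 : ∀ x ∈ C, (wmap hn Q F ∘ idx Q F) x = id x := fun x hx => wmap_idx hn good (hC hx)
  rw [Finset.image_congr h1, Finset.image_id]

lemma idx_injOn (hn : 0 < n) (good : Good n q r s J Q F) :
    Set.InjOn (idx Q F) (F.biUnion id : Set (Fin n)) := by
  intro a ha b hb hab
  have := wmap_idx hn good (Finset.mem_coe.1 ha)
  rw [hab, wmap_idx hn good (Finset.mem_coe.1 hb)] at this
  exact this.symm

lemma Fenc_recon (hn : 0 < n) (good : Good n q r s J Q F) :
    (Fenc Q F).image (fun C => C.image (wmap hn Q F)) = F := by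
  rw [Fenc, Finset.image_image]
  have h1 : ∀ C ∈ F, ((fun C => C.image (wmap hn Q F)) ∘ fun C => C.image (idx Q F)) C
      = id C := by
    intro C hC
    exact image_wmap_idx hn good (Finset.subset_biUnion_of_mem id hC)
  rw [Finset.image_congr h1, Finset.image_id]


/-! bigf and vtx -/

lemma bigf_spec (good : Good n q r s J Q F) :
    bigf J Q F ∈ J ∧ bigf J Q F ⊆ F.biUnion id ∧ ¬ bigf J Q F ⊆ Q := by
  rw [bigf, dif_pos good.large]
  exact good.large.choose_spec

lemma vtx_spec (hn : 0 < n) (good : Good n q r s J Q F) :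
    vtx hn J Q F ∈ bigf J Q F \ Q := by
  have h1 : (bigf J Q F \ Q).Nonempty := Finset.sdiff_nonempty.2 (bigf_spec good).2.2
  rw [vtx, dif_pos h1]
  exact Finset.min'_mem _ h1

lemma vtx_mem_bigf (hn : 0 < n) (good : Good n q r s J Q F) :
    vtx hn J Q F ∈ bigf J Q F := (Finset.mem_sdiff.1 (vtx_spec hn good)).1

lemma vtx_not_Q (hn : 0 < n) (good : Good n q r s J Q F) :
    vtx hn J Q F ∉ Q := (Finset.mem_sdiff.1 (vtx_spec hn good)).2

lemma vtx_mem_EL (hn : 0 < n) (good : Good n q r s J Q F) :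
    vtx hn J Q F ∈ EL Q F := by
  rw [EL, Finset.mem_sort]
  exact Finset.mem_sdiff.2 ⟨(bigf_spec good).2.1 (vtx_mem_bigf hn good), vtx_not_Q hn good⟩

lemma efun_getElem (hn : 0 < n) {i : ℕ} (hi : i < (EL Q F).length) :
    efun hn Q F i = (EL Q F)[i] :=
  List.getD_eq_getElem _ _ hi

lemma cidx_val {k : ℕ} (hk : 0 < k) (hn : 0 < n) (good : Good n q r s J Q F)
    (hEk : (EL Q F).length ≤ k) :
    (cidx k hk hn J Q F : ℕ) = (EL Q F).idxOf (vtx hn J Q F) := by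
  have h1 : (EL Q F).idxOf (vtx hn J Q F) < (EL Q F).length :=
    List.idxOf_lt_length_iff.2 (vtx_mem_EL hn good)
  simp only [cidx]
  exact Nat.mod_eq_of_lt (lt_of_lt_of_le h1 hEk)

lemma efun_cidx {k : ℕ} (hk : 0 < k) (hn : 0 < n) (good : Good n q r s J Q F)
    (hEk : (EL Q F).length ≤ k) :
    efun hn Q F (cidx k hk hn J Q F : ℕ) = vtx hn J Q F := by
  rw [cidx_val hk hn good hEk]
  have h1 : (EL Q F).idxOf (vtx hn J Q F) < (EL Q F).length :=
    List.idxOf_lt_length_iff.2 (vtx_mem_EL hn good)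
  rw [efun_getElem hn h1]
  exact List.getElem_idxOf h1

/-! decoding of the erased edge -/

lemma dec_on_U (ctx : Ctx n q r s J Q) (good : Good n q r s J Q F)
    {k : ℕ} (hk : 0 < k) (hEk : (EL Q F).length ≤ k)
    {u : Fin n} (hu : u ∈ (Stmt6.bigf J Q F).erase (vtx ctx.hn J Q F)) :
    dec q k hk ctx.hn Q (cidx k hk ctx.hn J Q F, epr k hk ctx.hn J Q F) (idx Q F u) = u := by
  have hn := ctx.hn
  have huV : u ∈ F.biUnion id := (bigf_spec good).2.1 (Finset.mem_of_mem_erase hu)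
  have hiL : idx Q F u < (LL Q F).length := idx_lt_LL good huV
  have hLlen : (LL Q F).length = q + (EL Q F).length := LL_len ctx good
  have hQlen : (Q.sort (· ≤ ·)).length = q := by rw [Finset.length_sort, ctx.hQ]
  have hwu : wmap hn Q F (idx Q F u) = u := wmap_idx hn good huV
  rw [wmap, LL] at hwu
  by_cases hlt : idx Q F u < q
  · rw [dec, if_pos hlt]
    exact (List.getD_append (Q.sort (· ≤ ·)) (EL Q F) ⟨0, hn⟩ (idx Q F u)
      (by omega)).symm.trans hwu
  · rw [dec, if_neg hlt]
    have hiq : idx Q F u - q < (EL Q F).length := by omega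
    have h2 : (Q.sort (· ≤ ·) ++ EL Q F).getD (idx Q F u) ⟨0, hn⟩
        = (EL Q F).getD (idx Q F u - (Q.sort (· ≤ ·)).length) ⟨0, hn⟩ :=
      List.getD_append_right (Q.sort (· ≤ ·)) (EL Q F) ⟨0, hn⟩ (idx Q F u) (by omega)
    rw [hQlen] at h2
    have hefu : efun hn Q F (idx Q F u - q) = u := h2.symm.trans hwu
    have hmod : (idx Q F u - q) % k = idx Q F u - q := Nat.mod_eq_of_lt (by omega)
    have hne : (⟨(idx Q F u - q) % k, Nat.mod_lt _ hk⟩ : Fin k) ≠ cidx k hk hn J Q F := by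
      intro hcon
      have : efun hn Q F (idx Q F u - q) = vtx hn J Q F := by
        have := congrArg (fun j : Fin k => efun hn Q F (j : ℕ)) hcon
        simp only [hmod] at this
        rw [this, efun_cidx hk hn good hEk]
      rw [hefu] at this
      exact (Finset.ne_of_mem_erase hu) this
    show epr k hk hn J Q F _ = u
    rw [epr, Function.update_of_ne hne]
    simp only [hmod]
    exact hefu

lemma dec_Uenc (ctx : Ctx n q r s J Q) (good : Good n q r s J Q F)
    {k : ℕ} (hk : 0 < k) (hEk : (EL Q F).length ≤ k) :
    (Uenc ctx.hn J Q F).image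
        (dec q k hk ctx.hn Q (cidx k hk ctx.hn J Q F, epr k hk ctx.hn J Q F)) =
      (Stmt6.bigf J Q F).erase (vtx ctx.hn J Q F) := by
  rw [Uenc, Finset.image_image]
  have h1 : ∀ u ∈ (Stmt6.bigf J Q F).erase (vtx ctx.hn J Q F),
      (dec q k hk ctx.hn Q (cidx k hk ctx.hn J Q F, epr k hk ctx.hn J Q F) ∘ idx Q F) u
        = id u := fun u hu => dec_on_U ctx good hk hEk hu
  rw [Finset.image_congr h1, Finset.image_id]


/-! cardinalities and memberships of the encoded data -/

lemma bigf_card (ctx : Ctx n q r s J Q) (good : Good n q r s J Q F) :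
    (bigf J Q F).card = r :=
  ctx.hJ _ (bigf_spec good).1

lemma Uenc_card (ctx : Ctx n q r s J Q) (good : Good n q r s J Q F) :
    (Uenc ctx.hn J Q F).card = r - 1 := by
  rw [Uenc, Finset.card_image_of_injOn ((idx_injOn ctx.hn good).mono ?_),
    Finset.card_erase_of_mem (vtx_mem_bigf ctx.hn good), bigf_card ctx good]
  intro x hx
  exact (bigf_spec good).2.1 (Finset.mem_of_mem_erase hx)

lemma Fenc_card (ctx : Ctx n q r s J Q) (good : Good n q r s J Q F) :
    (Fenc Q F).card = s := by
  rw [Fenc, Finset.card_image_of_injOn, good.cardF]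
  intro C₁ h₁ C₂ h₂ h
  have r₁ := image_wmap_idx ctx.hn good
    (Finset.subset_biUnion_of_mem id (Finset.mem_coe.1 h₁))
  have r₂ := image_wmap_idx ctx.hn good
    (Finset.subset_biUnion_of_mem id (Finset.mem_coe.1 h₂))
  simp only [id_eq] at r₁ r₂
  rw [← r₁, ← r₂]
  exact congrArg _ h

lemma Uenc_subset_range (ctx : Ctx n q r s J Q) (good : Good n q r s J Q F) :
    Uenc ctx.hn J Q F ⊆ Finset.range (s * q) := by
  intro j hj
  obtain ⟨u, hu, rfl⟩ := Finset.mem_image.1 hj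
  have huV : u ∈ F.biUnion id := (bigf_spec good).2.1 (Finset.mem_of_mem_erase hu)
  exact Finset.mem_range.2 (lt_of_lt_of_le (idx_lt_LL good huV) (LL_len_le ctx good))

lemma Uenc_mem (ctx : Ctx n q r s J Q) (good : Good n q r s J Q F) :
    Uenc ctx.hn J Q F ∈ (Finset.range (s * q)).powersetCard (r - 1) :=
  Finset.mem_powersetCard.2 ⟨Uenc_subset_range ctx good, Uenc_card ctx good⟩

lemma Fenc_mem (ctx : Ctx n q r s J Q) (good : Good n q r s J Q F) :
    Fenc Q F ∈ ((Finset.range (s * q)).powersetCard q).powersetCard s := by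
  refine Finset.mem_powersetCard.2 ⟨?_, Fenc_card ctx good⟩
  intro C' hC'
  obtain ⟨C, hC, rfl⟩ := Finset.mem_image.1 hC'
  have hCV : C ⊆ F.biUnion id := Finset.subset_biUnion_of_mem id hC
  refine Finset.mem_powersetCard.2 ⟨?_, ?_⟩
  · intro j hj
    obtain ⟨x, hx, rfl⟩ := Finset.mem_image.1 hj
    exact Finset.mem_range.2
      (lt_of_lt_of_le (idx_lt_LL good (hCV hx)) (LL_len_le ctx good))
  · rw [Finset.card_image_of_injOn ((idx_injOn ctx.hn good).mono (by exact_mod_cast hCV))]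
    exact good.cliq C hC

lemma Fenc_biUnion (ctx : Ctx n q r s J Q) (good : Good n q r s J Q F) :
    (Fenc Q F).biUnion id = (F.biUnion id).image (idx Q F) := by
  ext j
  simp only [Fenc, Finset.mem_biUnion, Finset.mem_image, id_eq]
  constructor
  · rintro ⟨a, ⟨C, hC, rfl⟩, hj⟩
    obtain ⟨x, hx, rfl⟩ := Finset.mem_image.1 hj
    exact ⟨x, ⟨C, hC, hx⟩, rfl⟩
  · rintro ⟨x, hx, rfl⟩
    obtain ⟨C, hC, hxC⟩ := hx
    exact ⟨C.image (idx Q F), ⟨C, hC, rfl⟩, Finset.mem_image_of_mem _ hxC⟩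

lemma Fenc_biUnion_card (ctx : Ctx n q r s J Q) (good : Good n q r s J Q F) :
    ((Fenc Q F).biUnion id).card = q + (EL Q F).length := by
  rw [Fenc_biUnion ctx good,
    Finset.card_image_of_injOn (idx_injOn ctx.hn good)]
  have h1 : (EL Q F).length = (F.biUnion id \ Q).card := Finset.length_sort _
  have h2 : (F.biUnion id \ Q).card = (F.biUnion id).card - Q.card :=
    Finset.card_sdiff_of_subset (QsubV good)
  have h3 := Finset.card_le_card (QsubV good)
  have h4 := ctx.hQ
  omega

/-! the key injectivity property -/

lemma update_epr {k : ℕ} (hk : 0 < k) (hn : 0 < n) (good : Good n q r s J Q F)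
    (hEk : (EL Q F).length ≤ k) :
    Function.update (epr k hk hn J Q F) (cidx k hk hn J Q F) (vtx hn J Q F)
      = fun i : Fin k => efun hn Q F i := by
  rw [epr, Function.update_idem]
  have h0 : vtx hn J Q F = (fun i : Fin k => efun hn Q F i) (cidx k hk hn J Q F) :=
    (efun_cidx hk hn good hEk).symm
  rw [h0]
  exact Function.update_eq_self _ _

lemma mem_EL_iff {x : Fin n} : x ∈ EL Q F ↔ x ∈ F.biUnion id \ Q := Finset.mem_sort _

lemma pim_inj (ctx : Ctx n q r s J Q) {F₁ F₂ : Finset (Finset (Fin n))}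
    (g₁ : Good n q r s J Q F₁) (g₂ : Good n q r s J Q F₂)
    {k : ℕ} (hk : 0 < k) (hE₁ : (EL Q F₁).length ≤ k) (hE₂ : (EL Q F₂).length ≤ k)
    (hpi : pim q k hk ctx.hn J Q F₁ = pim q k hk ctx.hn J Q F₂)
    (hv : vtx ctx.hn J Q F₁ = vtx ctx.hn J Q F₂) : F₁ = F₂ := by
  have hn := ctx.hn
  rw [pim, pim, Prod.mk.injEq, Prod.mk.injEq, Prod.mk.injEq] at hpi
  obtain ⟨⟨hc, he⟩, hU, hFe⟩ := hpi
  have hef : (fun i : Fin k => efun hn Q F₁ i) = fun i : Fin k => efun hn Q F₂ i := by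
    rw [← update_epr hk hn g₁ hE₁, ← update_epr hk hn g₂ hE₂, hc, he, hv]
  have htlen : (EL Q F₁).length = (EL Q F₂).length := by
    have h₁ := Fenc_biUnion_card ctx g₁
    have h₂ := Fenc_biUnion_card ctx g₂
    rw [hFe] at h₁
    omega
  have hEL : EL Q F₁ = EL Q F₂ := by
    refine List.ext_getElem htlen fun i h1 h2 => ?_
    have hik : i < k := lt_of_lt_of_le h1 hE₁
    have := congrFun hef ⟨i, hik⟩
    simp only at this
    rw [← efun_getElem hn h1, ← efun_getElem hn h2]
    exact this
  have hVQ : F₁.biUnion id \ Q = F₂.biUnion id \ Q := by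
    ext x
    rw [← mem_EL_iff, ← mem_EL_iff, hEL]
  have hLL : LL Q F₁ = LL Q F₂ := by rw [LL, LL, EL, EL, hVQ]
  have hw : wmap hn Q F₁ = wmap hn Q F₂ := funext fun i => by rw [wmap, wmap, hLL]
  rw [← Fenc_recon hn g₁, ← Fenc_recon hn g₂, hFe, hw]


/-! counting lemmas -/

lemma count_pairs {k n : ℕ} (hn : 0 < n) :
    (((univ : Finset (Fin k × (Fin k → Fin n)))).filter
        fun p => p.2 p.1 = (⟨0, hn⟩ : Fin n)).card ≤ k * n ^ (k - 1) := by
  classical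
  have step1 : ∀ c : Fin k,
      ((univ : Finset (Fin k → Fin n)).filter fun e => e c = (⟨0, hn⟩ : Fin n)).card
        ≤ n ^ (k - 1) := by
    intro c
    have hcard : ((univ : Finset ({i : Fin k // ¬ i = c} → Fin n))).card = n ^ (k - 1) := by
      rw [Finset.card_univ, Fintype.card_fun, Fintype.card_subtype_compl,
        Fintype.card_subtype_eq, Fintype.card_fin, Fintype.card_fin]
    rw [← hcard]
    refine Finset.card_le_card_of_injOn
      (fun e (i : {i : Fin k // ¬ i = c}) => e i.1) (fun e _ => Finset.mem_univ _) ?_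
    intro e₁ h₁ e₂ h₂ h
    have he₁ := (Finset.mem_filter.1 (Finset.mem_coe.1 h₁)).2
    have he₂ := (Finset.mem_filter.1 (Finset.mem_coe.1 h₂)).2
    funext i
    by_cases hic : i = c
    · rw [hic, he₁, he₂]
    · exact congrFun h ⟨i, hic⟩
  have step2 : ((univ : Finset (Fin k × (Fin k → Fin n)))).filter
        (fun p => p.2 p.1 = (⟨0, hn⟩ : Fin n))
      = (univ : Finset (Fin k)).biUnion fun c =>
          ({c} : Finset (Fin k)) ×ˢ
            ((univ : Finset (Fin k → Fin n)).filter fun e => e c = (⟨0, hn⟩ : Fin n)) := by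
    ext p
    simp only [Finset.mem_filter, Finset.mem_univ, true_and, Finset.mem_biUnion,
      Finset.mem_product, Finset.mem_singleton]
    constructor
    · intro h
      exact ⟨p.1, rfl, h⟩
    · rintro ⟨c, hc, h⟩
      subst hc
      exact h
  rw [step2]
  refine le_trans (Finset.card_biUnion_le) ?_
  refine le_trans (Finset.sum_le_card_nsmul _ _ (n ^ (k - 1)) ?_) ?_
  · intro c _
    rw [Finset.card_product, Finset.card_singleton, one_mul]
    exact step1 c
  · rw [Finset.card_univ, Fintype.card_fin, smul_eq_mul]

lemma codeg_bound {n r : ℕ} {J : Finset (Finset (Fin n))} {U : Finset (Fin n)}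
    (hU : U.card = r - 1) :
    ((univ : Finset (Fin n)).filter fun x => x ∉ U ∧ insert x U ∈ J).card
      ≤ maxCodeg n r J := by
  classical
  refine le_trans (Finset.card_le_card_of_injOn (t := J.filter fun e => U ⊆ e)
    (fun x => insert x U) ?_ ?_) ?_
  · intro x hx
    have hx' := (Finset.mem_filter.1 hx).2
    exact Finset.mem_filter.2 ⟨hx'.2, Finset.subset_insert _ _⟩
  · intro x₁ h₁ x₂ h₂ h
    have hx₁ := (Finset.mem_filter.1 (Finset.mem_coe.1 h₁)).2.1
    have hx₂ := (Finset.mem_filter.1 (Finset.mem_coe.1 h₂)).2.1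
    have h' : insert x₁ U = insert x₂ U := h
    have : x₁ ∈ insert x₂ U := h' ▸ Finset.mem_insert_self x₁ U
    rcases Finset.mem_insert.1 this with h' | h'
    · exact h'
    · exact absurd h' hx₁
  · unfold maxCodeg
    exact Finset.le_sup (f := fun U => (J.filter fun e => U ⊆ e).card)
      (Finset.mem_powersetCard.2 ⟨Finset.subset_univ _, hU⟩)

end Stmt6

/-- the number of `(Q,J)`-large Erdős configurations of size `s` in
`Girth^g_{K_q^r}(K_n^r)` containing the clique `Q` is at most
`(sq)·C(sq, r-1)·C(sq, q)^s · n^{(q-r)(s-1)} · Δ(J)/n`. -/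
theorem stmt_6 (n q r g : ℕ) (hr : 2 ≤ r) (hqr : r < q) (hg : 3 ≤ g)
    (Q : Finset (Fin n)) (hQ : Q.card = q)
    (J : Finset (Finset (Fin n))) (hJ : ∀ f ∈ J, f.card = r) (s : ℕ) :
    (((((univ : Finset (Fin n)).powersetCard q).powerset).filter fun F =>
        (IsErdosConfig q r F ∧ F.card ≤ g) ∧ Q ∈ F ∧ F.card = s ∧
          ∃ f ∈ J, f ⊆ F.biUnion id ∧ ¬ f ⊆ Q).card : ℝ) ≤
      (s * q : ℝ) * ((s * q).choose (r - 1) : ℝ) * (((s * q).choose q : ℝ)) ^ s *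
        (n : ℝ) ^ ((q - r) * (s - 1)) * (maxCodeg n r J : ℝ) / (n : ℝ) := by
  classical
  set S := ((((univ : Finset (Fin n)).powersetCard q).powerset).filter fun F =>
        (IsErdosConfig q r F ∧ F.card ≤ g) ∧ Q ∈ F ∧ F.card = s ∧
          ∃ f ∈ J, f ⊆ F.biUnion id ∧ ¬ f ⊆ Q) with hSdef
  rcases S.eq_empty_or_nonempty with hSe | ⟨F₀, hF₀⟩
  · rw [hSe]
    simp only [Finset.card_empty, Nat.cast_zero]
    positivity
  -- context extraction
  have hF₀' := Finset.mem_filter.1 (hSdef ▸ hF₀)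
  obtain ⟨-, ⟨hconf₀, -⟩, hQF₀, hcard₀, -⟩ := hF₀'
  have hs3 : 3 ≤ s := hcard₀ ▸ hconf₀.1
  have hn : 0 < n := by
    have hQne : Q.Nonempty := Finset.card_pos.1 (by rw [hQ]; omega)
    exact hQne.choose.pos
  have ctx : Stmt6.Ctx n q r s J Q := ⟨hr, hqr, hs3, hn, hQ, hJ⟩
  set k := (q - r) * (s - 1) with hkdef
  have hk : 0 < k := Nat.mul_pos (by omega) (by omega)
  have goodS : ∀ F ∈ S, Stmt6.Good n q r s J Q F := by
    intro F hF
    rw [hSdef, Finset.mem_filter] at hF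
    obtain ⟨-, ⟨hconf, -⟩, hQF, hcard, hl⟩ := hF
    exact ⟨hconf.2.1, by rw [← hcard]; exact hconf.2.2.1, hQF, hcard, hl⟩
  have hEk : ∀ F ∈ S, (Stmt6.EL Q F).length ≤ k :=
    fun F hF => Stmt6.EL_len ctx (goodS F hF)
  -- the target set of encodings
  set T : Finset ((Fin k × (Fin k → Fin n)) × (Finset ℕ × Finset (Finset ℕ))) :=
    (((univ : Finset (Fin k × (Fin k → Fin n))).filter
        fun p => p.2 p.1 = (⟨0, ctx.hn⟩ : Fin n)) ×ˢ
      (((Finset.range (s * q)).powersetCard (r - 1)) ×ˢ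
        (((Finset.range (s * q)).powersetCard q).powersetCard s))) with hTdef
  have hmaps : ∀ F ∈ S, Stmt6.pim q k hk ctx.hn J Q F ∈ T := by
    intro F hF
    refine Finset.mem_product.2 ⟨?_, Finset.mem_product.2
      ⟨Stmt6.Uenc_mem ctx (goodS F hF), Stmt6.Fenc_mem ctx (goodS F hF)⟩⟩
    refine Finset.mem_filter.2 ⟨Finset.mem_univ _, ?_⟩
    show Stmt6.epr k hk ctx.hn J Q F (Stmt6.cidx k hk ctx.hn J Q F) = _
    rw [Stmt6.epr, Function.update_self]
  have hfib : ∀ b ∈ T,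
      (S.filter fun F => Stmt6.pim q k hk ctx.hn J Q F = b).card ≤ maxCodeg n r J := by
    intro b _
    rcases (S.filter fun F => Stmt6.pim q k hk ctx.hn J Q F = b).eq_empty_or_nonempty with
      he | ⟨F₁, hF₁⟩
    · rw [he, Finset.card_empty]; exact Nat.zero_le _
    have hF₁S : F₁ ∈ S := (Finset.mem_filter.1 hF₁).1
    have hb₁ : Stmt6.pim q k hk ctx.hn J Q F₁ = b := (Finset.mem_filter.1 hF₁).2
    have hUb : ((Stmt6.bigf J Q F₁).erase (Stmt6.vtx ctx.hn J Q F₁)).card = r - 1 := by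
      rw [Finset.card_erase_of_mem (Stmt6.vtx_mem_bigf ctx.hn (goodS F₁ hF₁S)),
        Stmt6.bigf_card ctx (goodS F₁ hF₁S)]
    have hsame : ∀ F ∈ S.filter (fun F => Stmt6.pim q k hk ctx.hn J Q F = b),
        (Stmt6.bigf J Q F).erase (Stmt6.vtx ctx.hn J Q F)
          = (Stmt6.bigf J Q F₁).erase (Stmt6.vtx ctx.hn J Q F₁) := by
      intro F hF
      have hFS : F ∈ S := (Finset.mem_filter.1 hF).1
      have hbF : Stmt6.pim q k hk ctx.hn J Q F = Stmt6.pim q k hk ctx.hn J Q F₁ :=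
        ((Finset.mem_filter.1 hF).2).trans hb₁.symm
      have h1 : (Stmt6.cidx k hk ctx.hn J Q F, Stmt6.epr k hk ctx.hn J Q F)
          = (Stmt6.cidx k hk ctx.hn J Q F₁, Stmt6.epr k hk ctx.hn J Q F₁) :=
        congrArg Prod.fst hbF
      have h2 : Stmt6.Uenc ctx.hn J Q F = Stmt6.Uenc ctx.hn J Q F₁ :=
        congrArg (fun p => p.2.1) hbF
      rw [← Stmt6.dec_Uenc ctx (goodS F hFS) hk (hEk F hFS),
        ← Stmt6.dec_Uenc ctx (goodS F₁ hF₁S) hk (hEk F₁ hF₁S), h2, h1]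
    refine le_trans (Finset.card_le_card_of_injOn (fun F => Stmt6.vtx ctx.hn J Q F)
      ?_ ?_) (Stmt6.codeg_bound hUb)
    · intro F hF
      have hFS : F ∈ S := (Finset.mem_filter.1 hF).1
      refine Finset.mem_filter.2 ⟨Finset.mem_univ _, ?_, ?_⟩
      · rw [← hsame F hF]
        exact Finset.notMem_erase _ _
      · rw [← hsame F hF,
          Finset.insert_erase (Stmt6.vtx_mem_bigf ctx.hn (goodS F hFS))]
        exact (Stmt6.bigf_spec (goodS F hFS)).1
    · intro F hF F' hF' hv
      have hFS : F ∈ S := (Finset.mem_filter.1 (Finset.mem_coe.1 hF)).1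
      have hF'S : F' ∈ S := (Finset.mem_filter.1 (Finset.mem_coe.1 hF')).1
      exact Stmt6.pim_inj ctx (goodS F hFS) (goodS F' hF'S) hk (hEk F hFS) (hEk F' hF'S)
        (((Finset.mem_filter.1 (Finset.mem_coe.1 hF)).2).trans
          ((Finset.mem_filter.1 (Finset.mem_coe.1 hF')).2).symm) hv
  have hcount : S.card ≤ maxCodeg n r J * T.card :=
    Finset.card_le_mul_card_image_of_maps_to hmaps _ hfib
  have hT : T.card ≤ (k * n ^ (k - 1)) *
      ((s * q).choose (r - 1) * ((s * q).choose q).choose s) := by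
    rw [hTdef]
    simp only [Finset.card_product, Finset.card_powersetCard, Finset.card_range]
    exact Nat.mul_le_mul_right _ (Stmt6.count_pairs ctx.hn)
  -- final arithmetic over ℕ
  have hks : k ≤ s * q := by
    have h1 : (q - r) * (s - 1) ≤ q * s := Nat.mul_le_mul (Nat.sub_le q r) (Nat.sub_le s 1)
    have h2 : q * s = s * q := Nat.mul_comm _ _
    omega
  have hC2 : ((s * q).choose q).choose s ≤ ((s * q).choose q) ^ s := Nat.choose_le_pow _ _
  have hk1 : k - 1 + 1 = k := by omega
  have hfin : S.card * n ≤ (s * q) * ((s * q).choose (r - 1)) * ((s * q).choose q) ^ s *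
      n ^ k * maxCodeg n r J := by
    calc S.card * n ≤ (maxCodeg n r J * ((k * n ^ (k - 1)) *
          ((s * q).choose (r - 1) * ((s * q).choose q).choose s))) * n :=
        Nat.mul_le_mul_right n (le_trans hcount (Nat.mul_le_mul_left _ hT))
      _ = (k * ((s * q).choose (r - 1) * (((s * q).choose q).choose s * maxCodeg n r J)))
          * (n ^ (k - 1) * n) := by ring
      _ = (k * ((s * q).choose (r - 1) * (((s * q).choose q).choose s * maxCodeg n r J)))
          * n ^ k := by rw [← pow_succ, hk1]
      _ ≤ ((s * q) * ((s * q).choose (r - 1) * (((s * q).choose q) ^ s * maxCodeg n r J)))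
          * n ^ k := by
        refine Nat.mul_le_mul_right _ (Nat.mul_le_mul hks (Nat.mul_le_mul_left _
          (Nat.mul_le_mul_right _ hC2)))
      _ = (s * q) * ((s * q).choose (r - 1)) * ((s * q).choose q) ^ s *
          n ^ k * maxCodeg n r J := by ring
  rw [div_eq_mul_inv, ← div_eq_mul_inv, le_div_iff₀ (by exact_mod_cast hn : (0:ℝ) < n)]
  exact_mod_cast hfin
end

section
/- Let q > r ≥ 1 and g ≥ 3. For 2 ≤ t < s ≤ g, any t vertex-disjoint copies of K_q^r in K_n^r extend to at most O(n^{(s-t)(q-r)-1}) Erdős configurations of size s in Girth^g_{K_q^r}(K_n^r); that is, Δ_t(Girth^g_{K_q^r}(K_n^r)^{(s)}) = O(n^{(s-t)(q-r)-1}). -/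
open Finset
open scoped Classical

private lemma arith_key (r a t b : ℕ) (hr : 1 ≤ r) (ha : 1 ≤ a) (ht : 2 ≤ t) (hb : 1 ≤ b) :
    a * (t + b) + r - t * (r + a) ≤ b * a - 1 := by
  have h1 : r + 1 ≤ t * r := by nlinarith
  have h2 : a * (t + b) + r + 1 ≤ t * (r + a) + b * a := by nlinarith
  have h3 : 1 ≤ b * a := Nat.one_le_iff_ne_zero.mpr (by positivity)
  generalize a * (t + b) = A at *
  generalize t * (r + a) = B at *
  generalize b * a = C at *
  omega

/-- for `2 ≤ t < s ≤ g`, any `t` vertex-disjoint copies of `K_q^r` in `K_n^r`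
extend to at most `O(n^{(s-t)(q-r)-1})` Erdős configurations of size `s`; i.e.
`Δ_t(Girth^g_{K_q^r}(K_n^r)^{(s)}) = O(n^{(s-t)(q-r)-1})`. -/
theorem stmt_7 (q r g : ℕ) (hr : 1 ≤ r) (hqr : r < q) (hg : 3 ≤ g)
    (t s : ℕ) (ht : 2 ≤ t) (hts : t < s) (hs : s ≤ g) :
    ∃ C : ℝ, 0 < C ∧ ∀ (n : ℕ) (U : Finset (Finset (Fin n))),
      U.card = t → (∀ Q ∈ U, Q.card = q) →
      (∀ Q₁ ∈ U, ∀ Q₂ ∈ U, Q₁ ≠ Q₂ → Disjoint Q₁ Q₂) →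
      (((((univ : Finset (Fin n)).powersetCard q).powerset).filter fun F =>
          (IsErdosConfig q r F ∧ F.card ≤ g) ∧ F.card = s ∧ U ⊆ F).card : ℝ) ≤
        C * (n : ℝ) ^ ((s - t) * (q - r) - 1) := by
  classical
  set m := (s - t) * (q - r) - 1 with hm
  set K := 2 ^ ((t * q + m).choose q) with hK
  refine ⟨((K * (m + 1) : ℕ) : ℝ), by positivity, ?_⟩
  intro n U hU hUq hUd
  set S := ((((univ : Finset (Fin n)).powersetCard q).powerset).filter fun F =>
      (IsErdosConfig q r F ∧ F.card ≤ g) ∧ F.card = s ∧ U ⊆ F) with hSdef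
  have hSmem : ∀ F ∈ S, IsErdosConfig q r F ∧ F.card = s ∧ U ⊆ F := by
    intro F hF
    rw [hSdef, mem_filter] at hF
    exact ⟨hF.2.1.1, hF.2.2⟩
  rcases Nat.eq_zero_or_pos n with hn | hn
  · subst hn
    have hSe : S = ∅ := by
      rw [eq_empty_iff_forall_notMem]
      intro F hF
      obtain ⟨hE, hcard, hUF⟩ := hSmem F hF
      obtain ⟨Q, hQ⟩ := card_pos.mp (show 0 < U.card by omega)
      have hq := hUq Q hQ
      have : Q = ∅ := Finset.eq_empty_of_isEmpty Q
      rw [this] at hq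
      simp at hq
      omega
    rw [hSe]
    simp only [card_empty, Nat.cast_zero]
    positivity
  -- main case : n ≥ 1
  have hUbi : (U.biUnion id).card = t * q := by
    calc (U.biUnion id).card = ∑ Q ∈ U, (id Q).card := card_biUnion hUd
      _ = ∑ Q ∈ U, q := Finset.sum_congr rfl (fun Q hQ => hUq Q hQ)
      _ = t * q := by rw [Finset.sum_const, hU, smul_eq_mul]
  have hkey : ∀ F ∈ S, (F.biUnion id \ U.biUnion id).card ≤ m := by
    intro F hF
    obtain ⟨hE, hcard, hUF⟩ := hSmem F hF
    have hsub : U.biUnion id ⊆ F.biUnion id :=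
      biUnion_subset_biUnion_of_subset_left _ hUF
    rw [card_sdiff_of_subset hsub, hUbi]
    have hbound : (F.biUnion id).card ≤ (q - r) * s + r := by
      have := hE.2.2.1
      rwa [hcard] at this
    have harith := arith_key r (q - r) t (s - t) hr (by omega) ht (by omega)
    have e1 : (q - r) * (t + (s - t)) = (q - r) * s := by congr 1; omega
    have e2 : t * (r + (q - r)) = t * q := by congr 1; omega
    rw [e1, e2] at harith
    calc (F.biUnion id).card - t * q ≤ ((q - r) * s + r) - t * q :=
          Nat.sub_le_sub_right hbound _
      _ ≤ (s - t) * (q - r) - 1 := harith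
      _ = m := hm.symm
  set f : Finset (Finset (Fin n)) → Finset (Fin n) := fun F => F.biUnion id \ U.biUnion id
    with hf
  set B := (range (m + 1)).biUnion (fun k => ((univ : Finset (Fin n)).powersetCard k)) with hB
  have hmaps : ∀ F ∈ S, f F ∈ B := by
    intro F hF
    rw [hB, mem_biUnion]
    have hfe : f F = F.biUnion id \ U.biUnion id := rfl
    exact ⟨(f F).card, mem_range.mpr (by rw [hfe]; have := hkey F hF; omega),
      mem_powersetCard.mpr ⟨subset_univ _, rfl⟩⟩
  have h1 : S.card ≤ K * B.card := by
    apply card_le_mul_card_image_of_maps_to hmaps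
    intro W hW
    have hWm : W.card ≤ m := by
      rw [hB, mem_biUnion] at hW
      obtain ⟨k, hk, hWk⟩ := hW
      rw [mem_powersetCard] at hWk
      rw [hWk.2]
      exact Nat.lt_succ_iff.mp (mem_range.mp hk)
    have hfib : (S.filter fun F => f F = W) ⊆
        ((U.biUnion id ∪ W).powersetCard q).powerset := by
      intro F hF
      rw [mem_filter] at hF
      obtain ⟨hFS, hfW⟩ := hF
      obtain ⟨hE, hcard, hUF⟩ := hSmem F hFS
      rw [mem_powerset]
      intro Q hQ
      rw [mem_powersetCard]
      refine ⟨?_, hE.2.1 Q hQ⟩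
      intro x hx
      have hxF : x ∈ F.biUnion id := mem_biUnion.mpr ⟨Q, hQ, hx⟩
      by_cases hxU : x ∈ U.biUnion id
      · exact mem_union_left _ hxU
      · refine mem_union_right _ ?_
        rw [← hfW]
        exact mem_sdiff.mpr ⟨hxF, hxU⟩
    calc (S.filter fun F => f F = W).card
        ≤ (((U.biUnion id ∪ W).powersetCard q).powerset).card := card_le_card hfib
      _ = 2 ^ (((U.biUnion id ∪ W).powersetCard q).card) := card_powerset _
      _ ≤ K := by
          rw [hK]
          apply Nat.pow_le_pow_right (by norm_num)
          rw [card_powersetCard]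
          apply Nat.choose_le_choose
          calc (U.biUnion id ∪ W).card ≤ (U.biUnion id).card + W.card := card_union_le _ _
            _ ≤ t * q + m := by rw [hUbi]; omega
  have h2 : B.card ≤ (m + 1) * n ^ m := by
    calc B.card ≤ ∑ k ∈ range (m + 1), ((univ : Finset (Fin n)).powersetCard k).card :=
          card_biUnion_le
      _ ≤ ∑ _k ∈ range (m + 1), n ^ m := by
          apply Finset.sum_le_sum
          intro k hk
          rw [card_powersetCard, card_univ, Fintype.card_fin]
          calc n.choose k ≤ n ^ k := Nat.choose_le_pow n k
            _ ≤ n ^ m := Nat.pow_le_pow_right hn (Nat.lt_succ_iff.mp (mem_range.mp hk))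
      _ = (m + 1) * n ^ m := by rw [Finset.sum_const, card_range, smul_eq_mul]
  have h3 : S.card ≤ K * (m + 1) * n ^ m := by
    calc S.card ≤ K * B.card := h1
      _ ≤ K * ((m + 1) * n ^ m) := Nat.mul_le_mul_left _ h2
      _ = K * (m + 1) * n ^ m := (mul_assoc _ _ _).symm
  calc (S.card : ℝ) ≤ ((K * (m + 1) * n ^ m : ℕ) : ℝ) := Nat.cast_le.mpr h3
    _ = ((K * (m + 1) : ℕ) : ℝ) * (n : ℝ) ^ m := by push_cast; ring
end

section
/- Let q ≥ r ≥ 2 and g ≥ 3. Suppose there exists a K_{q-1}^{r-1}-booster B' with disjoint decompositions B_1', B_2', both of girth at least g+1 and of cogirth at least g+1. Form the r-graph B on V(B') ∪ {v_1, v_2} whose edges are {v_i} ∪ e for e ∈ E(B'), i ∈ {1,2}, together with all r-subsets of each clique Q ∈ B_1' ∪ B_2'; and let φ_i(Q) = {{v_i} ∪ e : e ∈ Q} ∪ (r-subsets of Q). Then B_1 := φ_1(B_1') ∪ φ_2(B_2') and B_2 := φ_1(B_2') ∪ φ_2(B_1') are K_q^r-decompositions of B, each of girth at least g+1. -/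
open Finset

variable {V : Type*} [DecidableEq V]

/-- `P` is a `K_q^r`-decomposition of the edge set `E`. -/
def IsDecompOf {α : Type*} [DecidableEq α] (q r : ℕ) (E P : Finset (Finset α)) : Prop :=
  (∀ Q ∈ P, Q.card = q) ∧
    (∀ Q₁ ∈ P, ∀ Q₂ ∈ P, Q₁ ≠ Q₂ → (Q₁ ∩ Q₂).card < r) ∧
    P.biUnion (fun Q => Q.powersetCard r) = E

/-- The packing `P` has girth at least `g`. -/
def GirthGe {α : Type*} [DecidableEq α] (q r : ℕ) (P : Finset (Finset α)) (g : ℕ) :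
    Prop :=
  ∀ T ⊆ P, 2 ≤ T.card → T.card < g → (q - r) * T.card + r < (T.biUnion id).card

/-- The pair of packings `P₁, P₂` has cogirth at least `g`: no `i` cliques of `P₁ ∪ P₂`
with `2 ≤ i < g` span at most `i(q-r)+r-1` vertices. -/
def CogirthPairGe {α : Type*} [DecidableEq α] (q r : ℕ) (P₁ P₂ : Finset (Finset α))
    (g : ℕ) : Prop :=
  ∀ T ⊆ P₁ ∪ P₂, 2 ≤ T.card → T.card < g →
    T.card * (q - r) + r - 1 < (T.biUnion id).card

/-- Lift of a set `e` of vertices of `B'` by the apex vertex `v_i`. -/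
def apexLift (i : Fin 2) (e : Finset V) : Finset (V ⊕ Fin 2) :=
  insert (Sum.inr i) (e.image Sum.inl)

lemma inr_notMem_image_inl (i : Fin 2) (e : Finset V) :
    (Sum.inr i : V ⊕ Fin 2) ∉ e.image Sum.inl := by simp

lemma apexLift_card (i : Fin 2) (e : Finset V) :
    (apexLift i e).card = e.card + 1 := by
  rw [apexLift, card_insert_of_notMem (inr_notMem_image_inl i e),
    card_image_of_injective _ Sum.inl_injective]

lemma apexLift_injective (i : Fin 2) : Function.Injective (apexLift (V := V) i) := by
  intro a b h
  have h2 : (apexLift i a).erase (Sum.inr i) = (apexLift i b).erase (Sum.inr i) := by rw [h]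
  rw [apexLift, apexLift, erase_insert (inr_notMem_image_inl i a),
    erase_insert (inr_notMem_image_inl i b)] at h2
  exact Finset.image_injective Sum.inl_injective h2

lemma inr_mem_apexLift (i j : Fin 2) (e : Finset V) :
    (Sum.inr j : V ⊕ Fin 2) ∈ apexLift i e ↔ j = i := by
  simp [apexLift]

lemma apexLift_ne (i j : Fin 2) (hij : i ≠ j) (e e' : Finset V) :
    apexLift i e ≠ apexLift j e' := by
  intro h
  have h1 := (inr_mem_apexLift i i e).2 rfl
  rw [h, inr_mem_apexLift] at h1
  exact hij h1

lemma apexLift_inter_same (i : Fin 2) (e e' : Finset V) :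
    apexLift i e ∩ apexLift i e' = apexLift i (e ∩ e') := by
  ext x; cases x <;> simp [apexLift]

lemma apexLift_inter_ne (i j : Fin 2) (hij : i ≠ j) (e e' : Finset V) :
    apexLift i e ∩ apexLift j e' = (e ∩ e').image Sum.inl := by
  ext x
  cases x <;> simp [apexLift]
  rintro rfl rfl
  exact hij rfl

lemma biUnion_apexLift (i : Fin 2) (S : Finset (Finset V)) (hS : S.Nonempty) :
    S.biUnion (apexLift i) = insert (Sum.inr i) ((S.biUnion id).image Sum.inl) := by
  ext x
  simp only [mem_biUnion, apexLift, mem_insert, mem_image, id]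
  constructor
  · rintro ⟨Q, hQ, h | ⟨a, ha, rfl⟩⟩
    · exact Or.inl h
    · exact Or.inr ⟨a, ⟨Q, hQ, ha⟩, rfl⟩
  · rintro (rfl | ⟨a, ⟨Q, hQ, ha⟩, rfl⟩)
    · exact ⟨hS.choose, hS.choose_spec, Or.inl rfl⟩
    · exact ⟨Q, hQ, Or.inr ⟨a, ha, rfl⟩⟩

lemma biUnion_union' {α β : Type*} [DecidableEq α] [DecidableEq β] (s t : Finset α)
    (f : α → Finset β) : (s ∪ t).biUnion f = s.biUnion f ∪ t.biUnion f := by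
  ext x; simp [mem_biUnion, or_and_right, exists_or]

lemma biUnion_image' {α β γ : Type*} [DecidableEq β] [DecidableEq γ] (s : Finset α)
    (f : α → β) (g : β → Finset γ) : (s.image f).biUnion g = s.biUnion (fun a => g (f a)) := by
  ext x; simp [mem_biUnion]

lemma main_lemma (q r g : ℕ) (hr : 2 ≤ r) (hq : r ≤ q) (hg : 3 ≤ g)
    (B' C D : Finset (Finset V))
    (h₁ : IsDecompOf (q - 1) (r - 1) B' C) (h₂ : IsDecompOf (q - 1) (r - 1) B' D)
    (hdisj : Disjoint C D)
    (hgC : GirthGe (q - 1) (r - 1) C (g + 1))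
    (hgD : GirthGe (q - 1) (r - 1) D (g + 1))
    (hco : CogirthPairGe (q - 1) (r - 1) C D (g + 1)) :
    IsDecompOf q r
      (((B' ×ˢ (univ : Finset (Fin 2))).image fun p => apexLift p.2 p.1) ∪
        ((C ∪ D).biUnion fun Q => (Q.image Sum.inl).powersetCard r))
      (C.image (apexLift 0) ∪ D.image (apexLift 1)) ∧
    GirthGe q r (C.image (apexLift 0) ∪ D.image (apexLift 1)) (g + 1) := by
  obtain ⟨hc₁, hi₁, hu₁⟩ := h₁
  obtain ⟨hc₂, hi₂, hu₂⟩ := h₂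
  have hmem : ∀ {Q}, Q ∈ C.image (apexLift 0) ∪ D.image (apexLift 1) →
      ∃ i A, ((i = (0 : Fin 2) ∧ A ∈ C) ∨ (i = 1 ∧ A ∈ D)) ∧ Q = apexLift i A := by
    intro Q hQ
    rcases mem_union.mp hQ with h | h
    · obtain ⟨A, hA, rfl⟩ := mem_image.mp h
      exact ⟨0, A, Or.inl ⟨rfl, hA⟩, rfl⟩
    · obtain ⟨A, hA, rfl⟩ := mem_image.mp h
      exact ⟨1, A, Or.inr ⟨rfl, hA⟩, rfl⟩
  have hcross : ∀ A ∈ C, ∀ B ∈ D, (A ∩ B).card < r := by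
    intro A hA B hB
    have hne : A ≠ B := fun h => disjoint_left.mp hdisj hA (h ▸ hB)
    have hT : ({A, B} : Finset (Finset V)) ⊆ C ∪ D := by
      intro x hx
      rcases mem_insert.mp hx with rfl | hx
      · exact mem_union_left _ hA
      · exact mem_union_right _ (mem_singleton.mp hx ▸ hB)
    have hcard : ({A, B} : Finset (Finset V)).card = 2 := card_pair hne
    have hbu : ({A, B} : Finset (Finset V)).biUnion id = A ∪ B := by
      simp [biUnion_insert]
    have hcog := hco {A, B} hT (by rw [hcard]) (by rw [hcard]; omega)
    rw [hbu, hcard] at hcog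
    have h5 := card_union_add_card_inter A B
    have hA' := hc₁ A hA
    have hB' := hc₂ B hB
    omega
  refine ⟨⟨?_, ?_, ?_⟩, ?_⟩
  · intro Q hQ
    obtain ⟨i, A, hA, rfl⟩ := hmem hQ
    have hAc : A.card = q - 1 := by
      rcases hA with ⟨_, hA⟩ | ⟨_, hA⟩
      exacts [hc₁ A hA, hc₂ A hA]
    rw [apexLift_card, hAc]; omega
  · intro Q₁ hQ₁ Q₂ hQ₂ hne
    obtain ⟨i, A, hA, rfl⟩ := hmem hQ₁
    obtain ⟨j, B, hB, rfl⟩ := hmem hQ₂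
    by_cases hij : i = j
    · subst hij
      have hAB : A ≠ B := fun h => hne (by rw [h])
      rw [apexLift_inter_same, apexLift_card]
      have hlt : (A ∩ B).card < r - 1 := by
        rcases hA with ⟨hi0, hA⟩ | ⟨hi1, hA⟩ <;> rcases hB with ⟨hj0, hB⟩ | ⟨hj1, hB⟩
        · exact hi₁ A hA B hB hAB
        · exact absurd (hi0.symm.trans hj1) (by decide)
        · exact absurd (hi1.symm.trans hj0) (by decide)
        · exact hi₂ A hA B hB hAB
      omega
    · rw [apexLift_inter_ne i j hij, card_image_of_injective _ Sum.inl_injective]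
      rcases hA with ⟨hi0, hA⟩ | ⟨hi1, hA⟩ <;> rcases hB with ⟨hj0, hB⟩ | ⟨hj1, hB⟩
      · exact absurd (hi0.trans hj0.symm) hij
      · exact hcross A hA B hB
      · rw [inter_comm]; exact hcross B hB A hA
      · exact absurd (hi1.trans hj1.symm) hij
  · ext S
    constructor
    · intro hS
      obtain ⟨Q, hQ, hSQ⟩ := mem_biUnion.mp hS
      obtain ⟨i, A, hA, rfl⟩ := hmem hQ
      obtain ⟨hsub, hcard⟩ := mem_powersetCard.mp hSQ
      by_cases hi : Sum.inr i ∈ S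
      · have hsub' : S.erase (Sum.inr i) ⊆ A.image Sum.inl := by
          intro x hx
          have hx' := hsub (mem_of_mem_erase hx)
          rcases mem_insert.mp hx' with rfl | h
          · exact absurd rfl (ne_of_mem_erase hx)
          · exact h
        obtain ⟨e, he, hei⟩ := subset_image_iff.mp hsub'
        have hecard : e.card = r - 1 := by
          have h3 := card_erase_of_mem hi
          rw [← hei, card_image_of_injective _ Sum.inl_injective] at h3
          omega
        have heB : e ∈ B' := by
          rcases hA with ⟨_, hA⟩ | ⟨_, hA⟩
          · rw [← hu₁]; exact mem_biUnion.mpr ⟨A, hA, mem_powersetCard.mpr ⟨he, hecard⟩⟩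
          · rw [← hu₂]; exact mem_biUnion.mpr ⟨A, hA, mem_powersetCard.mpr ⟨he, hecard⟩⟩
        have hSe : apexLift i e = S := by
          rw [apexLift, hei, insert_erase hi]
        exact mem_union_left _
          (mem_image.mpr ⟨(e, i), mem_product.mpr ⟨heB, mem_univ i⟩, hSe⟩)
      · have hsub' : S ⊆ A.image Sum.inl := by
          intro x hx
          rcases mem_insert.mp (hsub hx) with rfl | h
          · exact absurd hx hi
          · exact h
        refine mem_union_right _
          (mem_biUnion.mpr ⟨A, ?_, mem_powersetCard.mpr ⟨hsub', hcard⟩⟩)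
        rcases hA with ⟨_, hA⟩ | ⟨_, hA⟩
        exacts [mem_union_left _ hA, mem_union_right _ hA]
    · intro hS
      rcases mem_union.mp hS with h | h
      · obtain ⟨⟨e, i⟩, hmem', heq⟩ := mem_image.mp h
        obtain ⟨heB, -⟩ := mem_product.mp hmem'
        subst heq
        fin_cases i
        · have h3 : e ∈ C.biUnion fun Q => Q.powersetCard (r - 1) := hu₁ ▸ heB
          obtain ⟨A, hA, hP⟩ := mem_biUnion.mp h3
          obtain ⟨he, hec⟩ := mem_powersetCard.mp hP
          refine mem_biUnion.mpr ⟨apexLift 0 A,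
            mem_union_left _ (mem_image_of_mem _ hA), mem_powersetCard.mpr ⟨?_, ?_⟩⟩
          · exact insert_subset_insert _ (image_subset_image he)
          · rw [apexLift_card, hec]; omega
        · have h3 : e ∈ D.biUnion fun Q => Q.powersetCard (r - 1) := hu₂ ▸ heB
          obtain ⟨A, hA, hP⟩ := mem_biUnion.mp h3
          obtain ⟨he, hec⟩ := mem_powersetCard.mp hP
          refine mem_biUnion.mpr ⟨apexLift 1 A,
            mem_union_right _ (mem_image_of_mem _ hA), mem_powersetCard.mpr ⟨?_, ?_⟩⟩
          · exact insert_subset_insert _ (image_subset_image he)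
          · rw [apexLift_card, hec]; omega
      · obtain ⟨A, hA, hP⟩ := mem_biUnion.mp h
        obtain ⟨hsub, hcard⟩ := mem_powersetCard.mp hP
        rcases mem_union.mp hA with hA | hA
        · exact mem_biUnion.mpr ⟨apexLift 0 A,
            mem_union_left _ (mem_image_of_mem _ hA),
            mem_powersetCard.mpr ⟨hsub.trans (subset_insert _ _), hcard⟩⟩
        · exact mem_biUnion.mpr ⟨apexLift 1 A,
            mem_union_right _ (mem_image_of_mem _ hA),
            mem_powersetCard.mpr ⟨hsub.trans (subset_insert _ _), hcard⟩⟩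
  · intro T hT hT2 hTg
    set S₁ := C.filter (fun Q => apexLift 0 Q ∈ T) with hS₁def
    set S₂ := D.filter (fun Q => apexLift 1 Q ∈ T) with hS₂def
    have hTeq : T = S₁.image (apexLift 0) ∪ S₂.image (apexLift 1) := by
      ext x
      constructor
      · intro hx
        rcases mem_union.mp (hT hx) with h | h
        · obtain ⟨A, hA, rfl⟩ := mem_image.mp h
          exact mem_union_left _ (mem_image_of_mem _ (mem_filter.mpr ⟨hA, hx⟩))
        · obtain ⟨A, hA, rfl⟩ := mem_image.mp h
          exact mem_union_right _ (mem_image_of_mem _ (mem_filter.mpr ⟨hA, hx⟩))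
      · intro hx
        rcases mem_union.mp hx with h | h <;> obtain ⟨A, hA, rfl⟩ := mem_image.mp h <;>
          exact (mem_filter.mp hA).2
    have hdisj' : Disjoint (S₁.image (apexLift 0)) (S₂.image (apexLift 1)) := by
      rw [disjoint_left]
      rintro x h1 h2
      obtain ⟨A, hA, rfl⟩ := mem_image.mp h1
      obtain ⟨B, hB, hBe⟩ := mem_image.mp h2
      exact apexLift_ne 1 0 (by decide) B A hBe
    have hcardT : T.card = S₁.card + S₂.card := by
      rw [hTeq, card_union_of_disjoint hdisj',
        card_image_of_injective _ (apexLift_injective 0),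
        card_image_of_injective _ (apexLift_injective 1)]
    have hbuT : T.biUnion id = S₁.biUnion (apexLift 0) ∪ S₂.biUnion (apexLift 1) := by
      rw [hTeq, biUnion_union', biUnion_image', biUnion_image']
      simp only [id_eq]
    have hqr : q - 1 - (r - 1) = q - r := by omega
    by_cases h2e : S₂ = ∅
    · have h20 : S₂.card = 0 := by rw [h2e, card_empty]
      have h1ne : S₁.Nonempty := by rw [← card_pos]; omega
      have hbu : T.biUnion id = insert (Sum.inr 0) ((S₁.biUnion id).image Sum.inl) := by
        rw [hbuT, h2e, biUnion_apexLift 0 S₁ h1ne]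
        simp
      have hcard' : (T.biUnion id).card = (S₁.biUnion id).card + 1 := by
        rw [hbu, card_insert_of_notMem (inr_notMem_image_inl _ _),
          card_image_of_injective _ Sum.inl_injective]
      have hG := hgC S₁ (filter_subset _ _) (by omega) (by omega)
      rw [hqr] at hG
      have hone : S₁.card = T.card := by omega
      rw [hcard', ← hone]
      set m := (q - r) * S₁.card
      omega
    · by_cases h1e : S₁ = ∅
      · have h10 : S₁.card = 0 := by rw [h1e, card_empty]
        have h2ne : S₂.Nonempty := nonempty_iff_ne_empty.mpr h2e
        have hbu : T.biUnion id = insert (Sum.inr 1) ((S₂.biUnion id).image Sum.inl) := by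
          rw [hbuT, h1e, biUnion_apexLift 1 S₂ h2ne]
          simp
        have hcard' : (T.biUnion id).card = (S₂.biUnion id).card + 1 := by
          rw [hbu, card_insert_of_notMem (inr_notMem_image_inl _ _),
            card_image_of_injective _ Sum.inl_injective]
        have hG := hgD S₂ (filter_subset _ _) (by omega) (by omega)
        rw [hqr] at hG
        have hone : S₂.card = T.card := by omega
        rw [hcard', ← hone]
        set m := (q - r) * S₂.card
        omega
      · have h1ne : S₁.Nonempty := nonempty_iff_ne_empty.mpr h1e
        have h2ne : S₂.Nonempty := nonempty_iff_ne_empty.mpr h2e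
        have hbu : T.biUnion id =
            insert (Sum.inr 0) (insert (Sum.inr 1)
              (((S₁ ∪ S₂).biUnion id).image Sum.inl)) := by
          rw [hbuT, biUnion_apexLift 0 S₁ h1ne, biUnion_apexLift 1 S₂ h2ne,
            biUnion_union', image_union, insert_union, union_insert]
        have hnotmem : (Sum.inr 0 : V ⊕ Fin 2) ∉
            insert (Sum.inr 1) (((S₁ ∪ S₂).biUnion id).image Sum.inl) := by
          simp
        have hcard' : (T.biUnion id).card = ((S₁ ∪ S₂).biUnion id).card + 2 := by
          rw [hbu, card_insert_of_notMem hnotmem,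
            card_insert_of_notMem (inr_notMem_image_inl _ _),
            card_image_of_injective _ Sum.inl_injective]
        have hdS : Disjoint S₁ S₂ :=
          disjoint_of_subset_left (filter_subset _ _)
            (disjoint_of_subset_right (filter_subset _ _) hdisj)
        have hcardU : (S₁ ∪ S₂).card = T.card := by
          rw [card_union_of_disjoint hdS]; omega
        have hsub' : S₁ ∪ S₂ ⊆ C ∪ D :=
          union_subset_union (filter_subset _ _) (filter_subset _ _)
        have hG := hco (S₁ ∪ S₂) hsub' (by omega) (by omega)
        rw [hqr, hcardU, mul_comm] at hG
        rw [hcard']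
        set m := (q - r) * T.card
        omega

/-- given a `K_{q-1}^{r-1}`-booster `B'` with disjoint decompositions
`B₁', B₂'`, both of girth at least `g+1` and of cogirth at least `g+1`, form the `r`-graph
`B` on `V(B') ∪ {v₁, v₂}` with edges `{vᵢ} ∪ e` for `e ∈ E(B')` together with all
`r`-subsets of each lifted clique; then `B₁ := φ₁(B₁') ∪ φ₂(B₂')` and
`B₂ := φ₁(B₂') ∪ φ₂(B₁')` are `K_q^r`-decompositions of `B`, each of girth at least
`g+1`. -/
theorem stmt_10 (q r g : ℕ) (hr : 2 ≤ r) (hq : r ≤ q) (hg : 3 ≤ g)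
    (B' B₁' B₂' : Finset (Finset V))
    (h₁ : IsDecompOf (q - 1) (r - 1) B' B₁') (h₂ : IsDecompOf (q - 1) (r - 1) B' B₂')
    (hdisj : Disjoint B₁' B₂')
    (hg₁ : GirthGe (q - 1) (r - 1) B₁' (g + 1))
    (hg₂ : GirthGe (q - 1) (r - 1) B₂' (g + 1))
    (hco : CogirthPairGe (q - 1) (r - 1) B₁' B₂' (g + 1)) :
    IsDecompOf q r
      (((B' ×ˢ (univ : Finset (Fin 2))).image fun p => apexLift p.2 p.1) ∪
        ((B₁' ∪ B₂').biUnion fun Q => (Q.image Sum.inl).powersetCard r))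
      (B₁'.image (apexLift 0) ∪ B₂'.image (apexLift 1)) ∧
    IsDecompOf q r
      (((B' ×ˢ (univ : Finset (Fin 2))).image fun p => apexLift p.2 p.1) ∪
        ((B₁' ∪ B₂').biUnion fun Q => (Q.image Sum.inl).powersetCard r))
      (B₂'.image (apexLift 0) ∪ B₁'.image (apexLift 1)) ∧
    GirthGe q r (B₁'.image (apexLift 0) ∪ B₂'.image (apexLift 1)) (g + 1) ∧
    GirthGe q r (B₂'.image (apexLift 0) ∪ B₁'.image (apexLift 1)) (g + 1) := by
  obtain ⟨d₁, g₁⟩ := main_lemma q r g hr hq hg B' B₁' B₂' h₁ h₂ hdisj hg₁ hg₂ hco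
  have hco' : CogirthPairGe (q - 1) (r - 1) B₂' B₁' (g + 1) := by
    intro T hT h2 h3
    exact hco T (by rwa [union_comm] at hT) h2 h3
  obtain ⟨d₂, g₂⟩ := main_lemma q r g hr hq hg B' B₂' B₁' h₂ h₁ hdisj.symm hg₂ hg₁ hco'
  rw [union_comm B₂' B₁'] at d₂
  exact ⟨d₁, d₂, g₁, g₂⟩
end
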